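/- arXiv:math/0412302 — 3 statements merged into one kernel-verified Lean document; each statement's English description precedes it below -/
import Mathlib

section
/- Let u, w ∈ W. Then there exists v₀ ∈ W with v₀ ≤ u such that, setting y = v₀ w, one has ℓ(y) = ℓ(w) − ℓ(v₀) and y ≤ v w for every v ∈ W with v ≤ u. In particular, the set {v w : v ∈ W, v ≤ u} contains a unique minimal element with respect to Bruhat order. -/
open CoxeterSystem

variable {B W : Type*} [Group W] {M : CoxeterMatrix B}

/-- The Bruhat order on `W`, via the subword property: `x ≤ y` iff some reduced word for `y`
has a sublist whose product is `x`. -/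
def CoxeterSystem.bruhatLE (cs : CoxeterSystem M W) (x y : W) : Prop :=
  ∃ ω : List B, cs.IsReduced ω ∧ cs.wordProd ω = y ∧
    ∃ ω' : List B, ω'.Sublist ω ∧ cs.wordProd ω' = x

/-- The standard parabolic subgroup `W_J` of `W`, generated by `{sⱼ : j ∈ J}`. -/
def CoxeterSystem.parab (cs : CoxeterSystem M W) (J : Set B) : Subgroup W :=
  Subgroup.closure (cs.simple '' J)

/-- `w ∈ W^J`: `w` has minimal length in the coset `w * W_J`. -/
def CoxeterSystem.IsMinRight (cs : CoxeterSystem M W) (J : Set B) (w : W) : Prop :=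
  ∀ u ∈ cs.parab J, cs.length w ≤ cs.length (w * u)

/-- `w ∈ ᴶW`: `w` has minimal length in the coset `W_J * w`. -/
def CoxeterSystem.IsMinLeft (cs : CoxeterSystem M W) (J : Set B) (w : W) : Prop :=
  ∀ u ∈ cs.parab J, cs.length w ≤ cs.length (u * w)

/-!
Induct on a reduced word for `u`. If `u = sᵢ u'` with `ℓ(u) > ℓ(u')` and `y' = v' w` is the
bottom element for `u'`, then the bottom element for `u` is the shorter of `y'` and `sᵢ y'`:
every `v ≤ u` satisfies `v ≤ u'` or `sᵢ v ≤ u'`, and `y ≤ b` implies `min(y, sᵢ y) ≤ sᵢ b`.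
Both facts need the subword property for *every* reduced word of `u`. It follows from the chain
description of the Bruhat order and the strong exchange condition, which we prove with the
permutation representation of `W` on `W × ZMod 2` (the reflection cocycle).
-/

open List

theorem List.eq_take_append_take_of_getElem_add {α : Type*} {l : List α} {m : ℕ}
    (hl : l.length = 2 * m) (h : ∀ k (hk : k < m), l[k + m]'(by omega) = l[k]'(by omega)) :
    l = l.take m ++ l.take m := by
  conv_lhs => rw [← take_append_drop m l]
  congr 1
  refine ext_getElem (by simp; omega) fun k hk₁ hk₂ ↦ ?_
  simpa [add_comm] using h k (by simp at hk₂; omega)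

namespace CoxeterSystem

variable (cs : CoxeterSystem M W)

local prefix:100 "s" => cs.simple
local prefix:100 "π" => cs.wordProd
local prefix:100 "ℓ" => cs.length
local prefix:100 "lis" => cs.leftInvSeq

theorem prod_map_alternatingWord_two_mul {G : Type*} [Monoid G] (f : B → G) (i j : B) (m : ℕ) :
    ((alternatingWord i j (2 * m)).map f).prod = (f i * f j) ^ m := by
  induction m with
  | zero => simp [alternatingWord]
  | succ m ih =>
    rw [mul_add_one, alternatingWord_succ', alternatingWord_succ']
    simp [ih, pow_succ', mul_assoc]

theorem getElem_leftInvSeq_alternatingWord_add (i j : B) (k : ℕ) (hk : k < M i j) :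
    (lis (alternatingWord i j (2 * M i j)))[k + M i j]'(by simp; omega) =
      (lis (alternatingWord i j (2 * M i j)))[k]'(by simp; omega) := by
  rw [getElem_leftInvSeq_alternatingWord cs i j (M i j) _ (by omega),
    getElem_leftInvSeq_alternatingWord cs i j (M i j) _ (by omega),
    prod_alternatingWord_eq_mul_pow, prod_alternatingWord_eq_mul_pow]
  have h₁ : (2 * (k + M i j) + 1) / 2 = k + M i j := by omega
  have h₂ : (2 * k + 1) / 2 = k := by omega
  simp [h₁, h₂, pow_add, simple_mul_simple_pow']

theorem even_count_leftInvSeq_alternatingWord_two_mul [DecidableEq W] (i j : B) (t : W) :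
    Even ((lis (alternatingWord i j (2 * M i j))).count t) := by
  rw [eq_take_append_take_of_getElem_add (by simp)
    (getElem_leftInvSeq_alternatingWord_add cs i j), count_append]
  exact ⟨_, rfl⟩

theorem simple_mul_mul_simple_eq_simple_iff {x : W} (i : B) : s i * x * s i = s i ↔ x = s i := by
  constructor
  · intro h
    simpa [mul_assoc] using congr_arg (s i * · * s i) h
  · rintro rfl
    simp

section ReflectionRepresentation

open scoped Classical

noncomputable def simplePerm (i : B) : Equiv.Perm (W × ZMod 2) :=
  Function.Involutive.toPerm (fun p ↦ (s i * p.1 * s i, p.2 + if p.1 = s i then 1 else 0)) <| by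
    rintro ⟨t, ε⟩
    refine Prod.ext (by simp [mul_assoc]) ?_
    dsimp only
    by_cases ht : t = s i
    · rw [if_pos ht, if_pos ((simple_mul_mul_simple_eq_simple_iff cs i).mpr ht), add_assoc,
        CharTwo.add_self_eq_zero, add_zero]
    · rw [if_neg ht, if_neg (mt (simple_mul_mul_simple_eq_simple_iff cs i).mp ht), add_zero,
        add_zero]

theorem simplePerm_apply (i : B) (t : W) (ε : ZMod 2) :
    cs.simplePerm i (t, ε) = (s i * t * s i, ε + if t = s i then 1 else 0) := rfl

theorem prod_map_simplePerm_apply (ω : List B) (t : W) (ε : ZMod 2) :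
    (ω.map cs.simplePerm).prod (t, ε) =
      (π ω * t * (π ω)⁻¹, ε + (lis ω).count (π ω * t * (π ω)⁻¹)) := by
  induction ω with
  | nil => simp [leftInvSeq]
  | cons i ω ih =>
    rw [map_cons, prod_cons, Equiv.Perm.mul_apply, ih, simplePerm_apply]
    set x := π ω * t * (π ω)⁻¹
    have hx : π (i :: ω) * t * (π (i :: ω))⁻¹ = s i * x * s i := by
      simp [x, wordProd_cons, mul_assoc]
    have hconj : s i * x * s i = MulAut.conj (s i) x := by simp
    rw [hx, leftInvSeq, count_cons, hconj,
      count_map_of_injective _ _ (MulAut.conj (s i)).injective]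
    have hc : (s i == MulAut.conj (s i) x) = true ↔ x = s i := by
      rw [beq_iff_eq, MulAut.conj_apply, inv_simple, eq_comm, simple_mul_mul_simple_eq_simple_iff]
    rw [if_congr hc rfl rfl]
    push_cast
    rw [add_assoc]

theorem isLiftable_simplePerm : M.IsLiftable cs.simplePerm := by
  intro i j
  ext ⟨t, ε⟩ : 1
  have hπ : π (alternatingWord i j (2 * M i j)) = 1 := by
    rw [wordProd, prod_map_alternatingWord_two_mul, simple_mul_simple_pow]
  rw [← prod_map_alternatingWord_two_mul, prod_map_simplePerm_apply, hπ]
  simp only [one_mul, inv_one, mul_one, Equiv.Perm.one_apply,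
    ZMod.natCast_eq_zero_iff_even.mpr (even_count_leftInvSeq_alternatingWord_two_mul cs i j t),
    add_zero]

noncomputable def reflRep : W →* Equiv.Perm (W × ZMod 2) :=
  cs.lift ⟨cs.simplePerm, cs.isLiftable_simplePerm⟩

theorem reflRep_wordProd (ω : List B) : cs.reflRep (π ω) = (ω.map cs.simplePerm).prod := by
  rw [wordProd, map_list_prod, map_map]
  congr 2
  exact funext (cs.lift_apply_simple cs.isLiftable_simplePerm)

/-- The reflection cocycle: by `reflParity_wordProd`, the parity of the number of occurrences
of `t` in the left inversion sequence of any word for `w`. -/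
noncomputable def reflParity (w t : W) : ZMod 2 := (cs.reflRep w (w⁻¹ * t * w, 0)).2

theorem reflParity_wordProd (ω : List B) (t : W) :
    cs.reflParity (π ω) t = (lis ω).count t := by
  rw [reflParity, reflRep_wordProd, prod_map_simplePerm_apply]
  simp [mul_assoc]

theorem reflRep_apply (w x : W) (ε : ZMod 2) :
    cs.reflRep w (x, ε) = (w * x * w⁻¹, ε + cs.reflParity w (w * x * w⁻¹)) := by
  obtain ⟨ω, rfl⟩ := cs.wordProd_surjective w
  rw [reflParity_wordProd, reflRep_wordProd, prod_map_simplePerm_apply]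

end ReflectionRepresentation

theorem reflParity_mul (x y t : W) :
    cs.reflParity (x * y) t = cs.reflParity x t + cs.reflParity y (x⁻¹ * t * x) := by
  have h₁ : y * ((x * y)⁻¹ * t * (x * y)) * y⁻¹ = x⁻¹ * t * x := by group
  have h₂ : x * (x⁻¹ * t * x) * x⁻¹ = t := by group
  rw [reflParity, map_mul, Equiv.Perm.mul_apply, reflRep_apply cs y, h₁, reflRep_apply, h₂,
    zero_add, add_comm]

theorem reflParity_one (t : W) : cs.reflParity 1 t = 0 := by
  rw [reflParity, map_one]
  rfl

theorem reflParity_simple_self (i : B) : cs.reflParity (s i) (s i) = 1 := by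
  rw [← wordProd_singleton, reflParity_wordProd, wordProd_singleton]
  simp [leftInvSeq]

theorem reflParity_inv (w t : W) : cs.reflParity w⁻¹ (w⁻¹ * t * w) = cs.reflParity w t := by
  have h := cs.reflParity_mul w w⁻¹ t
  rw [mul_inv_cancel, reflParity_one] at h
  exact (CharTwo.add_eq_zero.mp h.symm).symm

theorem reflParity_self {t : W} (ht : cs.IsReflection t) : cs.reflParity t t = 1 := by
  obtain ⟨w, i, rfl⟩ := ht
  have h₁ : (w * s i)⁻¹ * (w * s i * w⁻¹) * (w * s i) = s i := by group
  have h₂ : w⁻¹ * (w * s i * w⁻¹) * w = s i := by group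
  have h₃ := cs.reflParity_inv w (w * s i * w⁻¹)
  rw [h₂] at h₃
  rw [reflParity_mul, h₁, reflParity_mul, h₂, h₃, reflParity_simple_self, add_comm, ← add_assoc,
    CharTwo.add_self_eq_zero, zero_add]

theorem mem_leftInvSeq_of_reflParity_eq_one {ω : List B} {t : W}
    (h : cs.reflParity (π ω) t = 1) : t ∈ lis ω := by
  classical
  rw [reflParity_wordProd] at h
  refine count_pos_iff.mp (Nat.pos_of_ne_zero fun h₀ ↦ ?_)
  simp [h₀] at h

theorem reflParity_eq_one_of_isLeftInversion {w t : W} (h : cs.IsLeftInversion w t) :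
    cs.reflParity w t = 1 := by
  rcases (by decide : ∀ a : ZMod 2, a = 0 ∨ a = 1) (cs.reflParity w t) with h₀ | h₁
  · have htw : cs.reflParity (t * w) t = 1 := by
      rw [reflParity_mul, reflParity_self cs h.1, show t⁻¹ * t * t = t by group, h₀, add_zero]
    obtain ⟨ω, hω, hπ⟩ := cs.exists_isReduced (t * w)
    rw [hπ] at htw
    have hinv :=
      cs.isLeftInversion_of_mem_leftInvSeq hω (cs.mem_leftInvSeq_of_reflParity_eq_one htw)
    rw [← hπ] at hinv
    exact absurd h (h.1.isLeftInversion_mul_right_iff.mp hinv)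
  · exact h₁

/-- The strong exchange condition. -/
theorem exists_sublist_wordProd_eq_mul_of_isLeftInversion {ω : List B} {t : W}
    (h : cs.IsLeftInversion (π ω) t) : ∃ ω', ω' <+ ω ∧ π ω' = t * π ω := by
  obtain ⟨j, hj, rfl⟩ := getElem_of_mem
    (cs.mem_leftInvSeq_of_reflParity_eq_one (cs.reflParity_eq_one_of_isLeftInversion h))
  exact ⟨ω.eraseIdx j, eraseIdx_sublist _ _, by
    rw [← getD_leftInvSeq_mul_wordProd, getD_eq_getElem]⟩

theorem isReduced_cons_iff {ω : List B} {i : B} :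
    cs.IsReduced (i :: ω) ↔ cs.IsReduced ω ∧ ¬cs.IsLeftDescent (π ω) i := by
  constructor
  · intro h
    have hω : cs.IsReduced ω := by simpa using h.drop 1
    exact ⟨hω, by rw [not_isLeftDescent_iff, ← wordProd_cons, h.eq, hω.eq, length_cons]⟩
  · rintro ⟨hω, hi⟩
    rw [not_isLeftDescent_iff] at hi
    rw [IsReduced, wordProd_cons, hi, hω.eq, length_cons]

theorem exists_isReduced_cons_of_isLeftDescent {w : W} {i : B} (h : cs.IsLeftDescent w i) :
    ∃ γ, cs.IsReduced (i :: γ) ∧ π (i :: γ) = w := by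
  obtain ⟨γ, hγ, hπ⟩ := cs.exists_isReduced (s i * w)
  refine ⟨γ, cs.isReduced_cons_iff.mpr ⟨hγ, ?_⟩, ?_⟩
  · rwa [← hπ, ← isLeftDescent_iff_not_isLeftDescent_mul]
  · rw [wordProd_cons, ← hπ, simple_mul_simple_cancel_left]

theorem exists_sublist_cons_wordProd_eq_simple_mul {ω γ : List B} {i : B} (h : ω <+ i :: γ) :
    ∃ ω', ω' <+ i :: γ ∧ π ω' = s i * π ω := by
  rcases sublist_cons_iff.mp h with h | ⟨β, rfl, hβ⟩
  · exact ⟨i :: ω, h.cons_cons i, wordProd_cons _ _ _⟩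
  · exact ⟨β, hβ.cons i, by rw [wordProd_cons, simple_mul_simple_cancel_left]⟩

def IsBruhatStep (x y : W) : Prop := ∃ t, cs.IsReflection t ∧ y = t * x ∧ ℓ x < ℓ y

/-- The chain description of the Bruhat order (Björner–Brenti, Definition 2.1.1). -/
def ChainLE : W → W → Prop := Relation.ReflTransGen cs.IsBruhatStep

variable {cs}

theorem isBruhatStep_simple_mul {x : W} {i : B} (h : ¬cs.IsLeftDescent x i) :
    cs.IsBruhatStep x (s i * x) :=
  ⟨s i, cs.isReflection_simple i, rfl, by rw [not_isLeftDescent_iff] at h; omega⟩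

theorem IsBruhatStep.simple_mul {x y : W} {i : B} (h : cs.IsBruhatStep x y)
    (hlt : ℓ (s i * x) < ℓ (s i * y)) : cs.IsBruhatStep (s i * x) (s i * y) := by
  obtain ⟨t, ht, rfl, -⟩ := h
  refine ⟨s i * t * (s i)⁻¹, ht.conj _, by group, hlt⟩

theorem IsBruhatStep.exists_sublist {x : W} {ω : List B} (h : cs.IsBruhatStep x (π ω)) :
    ∃ ω', ω' <+ ω ∧ π ω' = x := by
  obtain ⟨t, ht, hπ, hlt⟩ := h
  have hx : t * π ω = x := by rw [hπ, ← mul_assoc, ht.mul_self, one_mul]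
  rw [← hx]
  exact cs.exists_sublist_wordProd_eq_mul_of_isLeftInversion ⟨ht, hx ▸ hlt⟩

theorem ChainLE.exists_sublist {x y : W} (h : cs.ChainLE x y) {ω : List B} (hω : π ω = y) :
    ∃ ω', ω' <+ ω ∧ π ω' = x := by
  induction h generalizing ω with
  | refl => exact ⟨ω, Sublist.refl ω, hω⟩
  | tail _ hzy ih =>
    obtain ⟨ω₁, h₁, hπ₁⟩ := (hω ▸ hzy).exists_sublist
    obtain ⟨ω', h', hπ'⟩ := ih hπ₁
    exact ⟨ω', h'.trans h₁, hπ'⟩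

/-- The lifting property for `ChainLE`, assuming the subword property below length `n`. -/
theorem ChainLE.simple_mul_simple_mul {n : ℕ}
    (hsub : ∀ ρ ρ' : List B, cs.IsReduced ρ → ρ.length < n → ρ' <+ ρ → cs.ChainLE (π ρ') (π ρ))
    {x w : W} {i : B} (h : cs.ChainLE x w) (hwn : ℓ (s i * w) ≤ n)
    (hw : ¬cs.IsLeftDescent w i) :
    cs.ChainLE (s i * x) (s i * w) := by
  induction h with
  | refl => exact .refl
  | @tail z w hxz hzw ih =>
    have hlt : ℓ z < ℓ w := let ⟨_, _, _, h⟩ := hzw; h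
    rw [not_isLeftDescent_iff] at hw
    by_cases hz : cs.IsLeftDescent z i
    · obtain ⟨γ, hγ, hπ⟩ := cs.exists_isReduced_cons_of_isLeftDescent hz
      obtain ⟨ω, hω, hπω⟩ := ChainLE.exists_sublist hxz hπ
      obtain ⟨ω', hω', hπω'⟩ := cs.exists_sublist_cons_wordProd_eq_simple_mul hω
      have hsz : cs.ChainLE (s i * x) z := by
        rw [← hπ, ← hπω, ← hπω']
        exact hsub _ _ hγ (by rw [← hγ.eq, hπ]; omega) hω'
      exact (hsz.tail hzw).tail (isBruhatStep_simple_mul (by rw [not_isLeftDescent_iff]; omega))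
    · rw [not_isLeftDescent_iff] at hz
      exact (ih (by omega) (by rw [not_isLeftDescent_iff]; omega)).tail
        (hzw.simple_mul (by omega))

theorem chainLE_of_sublist {ω ω' : List B} (hω : cs.IsReduced ω) (h : ω' <+ ω) :
    cs.ChainLE (π ω') (π ω) := by
  induction hn : ω.length using Nat.strong_induction_on generalizing ω ω' with
  | _ n ih =>
  cases ω with
  | nil =>
    rw [sublist_nil.mp h]
    exact .refl
  | cons i α =>
    obtain ⟨hα, hasc⟩ := cs.isReduced_cons_iff.mp hω
    have ihα : ∀ β, β <+ α → cs.ChainLE (π β) (π α) :=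
      fun β hβ ↦ ih α.length (by simp at hn; omega) hα hβ rfl
    rw [wordProd_cons]
    rcases sublist_cons_iff.mp h with h' | ⟨β, rfl, hβ⟩
    · exact (ihα _ h').tail (isBruhatStep_simple_mul hasc)
    · rw [wordProd_cons]
      exact (ihα β hβ).simple_mul_simple_mul (fun ρ ρ' hρ hlt hρ' ↦ ih _ hlt hρ hρ' rfl)
        (by rw [← wordProd_cons, hω.eq, hn]) hasc

/-- The subword property. -/
theorem bruhatLE_iff_chainLE {x y : W} : cs.bruhatLE x y ↔ cs.ChainLE x y := by
  constructor
  · rintro ⟨ω, hω, rfl, ω', h, rfl⟩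
    exact chainLE_of_sublist hω h
  · intro h
    obtain ⟨ω, hω, rfl⟩ := cs.exists_isReduced y
    obtain ⟨ω', h', hx⟩ := h.exists_sublist rfl
    exact ⟨ω, hω, rfl, ω', h', hx⟩

theorem exists_sublist_of_bruhatLE {x y : W} (h : cs.bruhatLE x y) {ω : List B} (hω : π ω = y) :
    ∃ ω', ω' <+ ω ∧ π ω' = x :=
  ChainLE.exists_sublist (bruhatLE_iff_chainLE.mp h) hω

theorem bruhatLE_refl (x : W) : cs.bruhatLE x x :=
  bruhatLE_iff_chainLE.mpr .refl

theorem bruhatLE_trans {x y z : W} (h₁ : cs.bruhatLE x y) (h₂ : cs.bruhatLE y z) :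
    cs.bruhatLE x z :=
  bruhatLE_iff_chainLE.mpr <|
    Relation.ReflTransGen.trans (bruhatLE_iff_chainLE.mp h₁) (bruhatLE_iff_chainLE.mp h₂)

theorem length_le_of_bruhatLE {x y : W} (h : cs.bruhatLE x y) : ℓ x ≤ ℓ y := by
  obtain ⟨ω, hω, rfl, ω', h, rfl⟩ := h
  exact (cs.length_wordProd_le ω').trans (h.length_le.trans_eq hω.eq.symm)

theorem bruhatLE_antisymm {x y : W} (h₁ : cs.bruhatLE x y) (h₂ : cs.bruhatLE y x) : x = y := by
  obtain ⟨ω, hω, rfl, ω', h, rfl⟩ := h₁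
  have hlen : ω.length ≤ ω'.length :=
    hω.eq ▸ (length_le_of_bruhatLE h₂).trans (cs.length_wordProd_le ω')
  rw [h.eq_of_length (le_antisymm h.length_le hlen)]

theorem bruhatLE_simple_mul {y : W} {i : B} (h : ¬cs.IsLeftDescent y i) :
    cs.bruhatLE y (s i * y) :=
  bruhatLE_iff_chainLE.mpr (.single (isBruhatStep_simple_mul h))

theorem simple_mul_bruhatLE {y : W} {i : B} (h : cs.IsLeftDescent y i) :
    cs.bruhatLE (s i * y) y := by
  simpa using bruhatLE_simple_mul (cs.isLeftDescent_iff_not_isLeftDescent_mul.mp h)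

theorem bruhatLE.simple_mul_simple_mul {v u : W} {i : B} (h : cs.bruhatLE v u)
    (hu : ¬cs.IsLeftDescent u i) : cs.bruhatLE (s i * v) (s i * u) := by
  obtain ⟨ω, hω, rfl, ω', h, rfl⟩ := h
  exact ⟨i :: ω, cs.isReduced_cons_iff.mpr ⟨hω, hu⟩, wordProd_cons _ _ _, i :: ω',
    h.cons_cons i, wordProd_cons _ _ _⟩

theorem bruhatLE_or_simple_mul_bruhatLE {u v : W} {i : B} (hu : ¬cs.IsLeftDescent u i)
    (h : cs.bruhatLE v (s i * u)) : cs.bruhatLE v u ∨ cs.bruhatLE (s i * v) u := by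
  obtain ⟨γ, hγ, rfl⟩ := cs.exists_isReduced u
  obtain ⟨ω, hω, rfl⟩ := exists_sublist_of_bruhatLE h (wordProd_cons cs i γ)
  rcases sublist_cons_iff.mp hω with hω | ⟨β, rfl, hβ⟩
  · exact .inl ⟨γ, hγ, rfl, ω, hω, rfl⟩
  · exact .inr ⟨γ, hγ, rfl, β, hβ, by rw [wordProd_cons, simple_mul_simple_cancel_left]⟩

/-- If `y ≤ b`, then `min(y, sᵢ y) ≤ sᵢ b`; here `z` stands for any common lower bound of
`y` and `sᵢ y`. -/
theorem bruhatLE_simple_mul_of_bruhatLE {b y z : W} {i : B} (hz : cs.bruhatLE z y)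
    (hz' : cs.bruhatLE z (s i * y)) (h : cs.bruhatLE y b) : cs.bruhatLE z (s i * b) := by
  by_cases hb : cs.IsLeftDescent b i
  · rw [isLeftDescent_iff_not_isLeftDescent_mul] at hb
    rw [← simple_mul_simple_cancel_left cs (w := b) i] at h
    rcases bruhatLE_or_simple_mul_bruhatLE hb h with h | h
    · exact bruhatLE_trans hz h
    · exact bruhatLE_trans hz' h
  · exact bruhatLE_trans (bruhatLE_trans hz h) (bruhatLE_simple_mul hb)

theorem exists_min_mul_simple_mul {u w v₁ : W} {i : B} (hu : ¬cs.IsLeftDescent u i)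
    (hv₁ : cs.bruhatLE v₁ u) (hlen : ℓ (v₁ * w) + ℓ v₁ = ℓ w)
    (hmin : ∀ v, cs.bruhatLE v u → cs.bruhatLE (v₁ * w) (v * w)) :
    ∃ v₀, cs.bruhatLE v₀ (s i * u) ∧ ℓ (v₀ * w) + ℓ v₀ = ℓ w ∧
      ∀ v, cs.bruhatLE v (s i * u) → cs.bruhatLE (v₀ * w) (v * w) := by
  have below : ∀ z, cs.bruhatLE z (v₁ * w) → cs.bruhatLE z (s i * (v₁ * w)) →
      ∀ v, cs.bruhatLE v (s i * u) → cs.bruhatLE z (v * w) := by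
    intro z hz hz' v hv
    rcases bruhatLE_or_simple_mul_bruhatLE hu hv with hv | hv
    · exact bruhatLE_trans hz (hmin v hv)
    · simpa [mul_assoc] using bruhatLE_simple_mul_of_bruhatLE hz hz' (hmin _ hv)
  by_cases hy : cs.IsLeftDescent (v₁ * w) i
  · refine ⟨s i * v₁, hv₁.simple_mul_simple_mul hu, ?_, ?_⟩
    · rw [isLeftDescent_iff] at hy
      have h₁ := cs.length_le_length_mul_add_left (s i * v₁) w
      have h₂ := cs.length_mul_le (s i) v₁
      rw [length_simple] at h₂
      rw [mul_assoc] at h₁ ⊢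
      omega
    · rw [mul_assoc]
      exact below _ (simple_mul_bruhatLE hy) (bruhatLE_refl _)
  · exact ⟨v₁, bruhatLE_trans hv₁ (bruhatLE_simple_mul hu), hlen,
      below _ (bruhatLE_refl _) (bruhatLE_simple_mul hy)⟩

theorem exists_min_mul (u w : W) :
    ∃ v₀, cs.bruhatLE v₀ u ∧ ℓ (v₀ * w) + ℓ v₀ = ℓ w ∧
      ∀ v, cs.bruhatLE v u → cs.bruhatLE (v₀ * w) (v * w) := by
  obtain ⟨ω, hω, rfl⟩ := cs.exists_isReduced u
  induction ω with
  | nil =>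
    refine ⟨1, bruhatLE_refl _, by simp, fun v hv ↦ ?_⟩
    have hv₁ : v = 1 := by simpa using length_le_of_bruhatLE hv
    rw [hv₁]
    exact bruhatLE_refl _
  | cons i α ih =>
    obtain ⟨hα, hasc⟩ := cs.isReduced_cons_iff.mp hω
    obtain ⟨v₁, hv₁, hlen, hmin⟩ := ih hα
    rw [wordProd_cons]
    exact exists_min_mul_simple_mul hasc hv₁ hlen hmin

end CoxeterSystem

/-- For `u, w ∈ W` there is `v₀ ≤ u` such that `y = v₀ w` satisfies `ℓ(y) = ℓ(w) - ℓ(v₀)`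
and `y ≤ v w` for all `v ≤ u`; in particular `{v w : v ≤ u}` has a unique minimal element. -/
theorem min_of_bruhat_interval_mul (cs : CoxeterSystem M W) (u w : W) :
    ∃ v₀ : W, cs.bruhatLE v₀ u ∧
      cs.length (v₀ * w) + cs.length v₀ = cs.length w ∧
      (∀ v : W, cs.bruhatLE v u → cs.bruhatLE (v₀ * w) (v * w)) ∧
      (∀ y : W, (∃ v : W, cs.bruhatLE v u ∧ y = v * w) →
        (∀ v : W, cs.bruhatLE v u → cs.bruhatLE y (v * w)) → y = v₀ * w) := by
  obtain ⟨v₀, hv₀, hlen, hmin⟩ := cs.exists_min_mul u w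
  refine ⟨v₀, hv₀, hlen, hmin, ?_⟩
  rintro y ⟨v, hv, rfl⟩ hy
  exact bruhatLE_antisymm (hy v₀ hv₀) (hmin v hv)
end

section
/- Let u, w, w' ∈ W with w' ≤ w in Bruhat order. Then there exists v' ∈ W with v' ≤ u such that u w' ≤ v' w. -/
/-!
The subword order coincides with the order generated by the Bruhat graph, whose edges
are `x → t * x` for reflections `t` with `ℓ x < ℓ (t * x)`. Passing from the graph to subwords
is the strong exchange property, proved with Tits' sign representation of `W` on `W × ℤˣ`: `s i`
conjugates the first factor and flips the sign exactly at `s i`. Along a word `ω`, the sign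
picked up at `t` is the parity of the number of occurrences of `t` in the left inversion
sequence of `ω`, so it depends only on `π ω`, and a reduced word shows that it is odd whenever
`t` is a left inversion.

In the graph order, `s` carries an edge `x → y` to an edge `s x → s y` unless `s x = y`; hence
`x ≤ y` implies `s x ≤ s y` or `s x ≤ y`, which is the lifting property. The theorem follows by
induction on `u` along ascents `u → s u`: given `v ≤ u` with `u w' ≤ v w`, take `s v` or `v`
according as `s` is an ascent or a descent of `v w`.
-/

open CoxeterSystem

variable {B W : Type*} [Group W] {M : CoxeterMatrix B}

namespace CoxeterSystem

open List

variable (cs : CoxeterSystem M W)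

local prefix:100 "s " => cs.simple
local prefix:100 "π " => cs.wordProd
local prefix:100 "ℓ " => cs.length
local prefix:100 "lis " => cs.leftInvSeq

theorem conj_simple_conj_simple (i : B) (t : W) :
    MulAut.conj (s i) (MulAut.conj (s i) t) = t := by
  rw [← MulAut.mul_apply, ← map_mul, simple_mul_simple_self, map_one, MulAut.one_apply]

theorem conj_simple_self (i : B) : MulAut.conj (s i) (s i) = s i := by
  rw [MulAut.conj_apply, mul_inv_cancel_right]

theorem conj_simple_eq_simple_iff (i : B) (t : W) : MulAut.conj (s i) t = s i ↔ t = s i := by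
  rw [← (MulAut.conj (s i)).injective.eq_iff, cs.conj_simple_conj_simple, cs.conj_simple_self]

open Classical in
noncomputable def simpleSignPerm (i : B) : Equiv.Perm (W × ℤˣ) :=
  Function.Involutive.toPerm
    (fun p => (MulAut.conj (s i) p.1, if p.1 = s i then -p.2 else p.2)) <| by
    rintro ⟨t, ε⟩
    by_cases ht : t = s i
    · simp only [ht, cs.conj_simple_self, if_true, neg_neg]
    · simp only [cs.conj_simple_conj_simple, cs.conj_simple_eq_simple_iff, if_neg ht]

open Classical in
theorem simpleSignPerm_apply (i : B) (t : W) (ε : ℤˣ) :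
    cs.simpleSignPerm i (t, ε) = (MulAut.conj (s i) t, if t = s i then -ε else ε) :=
  rfl

noncomputable def wordSignPerm (ω : List B) : Equiv.Perm (W × ℤˣ) :=
  (ω.map cs.simpleSignPerm).prod

open Classical in
theorem wordSignPerm_apply (ω : List B) (t : W) (ε : ℤˣ) :
    cs.wordSignPerm ω (t, ε) =
      (MulAut.conj (π ω) t, (-1) ^ count (MulAut.conj (π ω) t) (lis ω) * ε) := by
  induction ω with
  | nil => simp [wordSignPerm]
  | cons i ω ih =>
    set x := MulAut.conj (π ω) t
    have hconj : MulAut.conj (π (i :: ω)) t = MulAut.conj (s i) x := by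
      rw [wordProd_cons, map_mul, MulAut.mul_apply]
    have hcount : count (MulAut.conj (s i) x) (lis (i :: ω)) =
        count x (lis ω) + if x = s i then 1 else 0 := by
      rw [leftInvSeq, count_cons, count_map_of_injective _ _ (MulAut.conj (s i)).injective]
      by_cases hx : x = s i
      · simp only [hx, cs.conj_simple_self, beq_self_eq_true, if_true]
      · rw [if_neg hx, if_neg]
        rwa [beq_iff_eq, eq_comm, cs.conj_simple_eq_simple_iff]
    simp only [wordSignPerm, map_cons, prod_cons, Equiv.Perm.mul_apply] at ih ⊢
    rw [ih, simpleSignPerm_apply, hconj, hcount]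
    split_ifs <;> simp [pow_succ]

theorem wordSignPerm_alternatingWord (i i' : B) (m : ℕ) :
    cs.wordSignPerm (alternatingWord i i' (2 * m)) =
      (cs.simpleSignPerm i * cs.simpleSignPerm i') ^ m := by
  induction m with
  | zero => rfl
  | succ m ih =>
    rw [show 2 * (m + 1) = 2 * m + 1 + 1 by ring, alternatingWord_succ', alternatingWord_succ',
      if_neg (by simp [parity_simps]), if_pos (by simp [parity_simps]), pow_succ', ← ih]
    simp only [wordSignPerm, map_cons, prod_cons, mul_assoc]

theorem leftInvSeq_alternatingWord_two_mul (i i' : B) (p : ℕ) :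
    lis (alternatingWord i i' (2 * p)) = (range (2 * p)).map fun k => s i * (s i' * s i) ^ k := by
  refine ext_getElem (by simp) fun k hk _ => ?_
  rw [getElem_leftInvSeq_alternatingWord _ _ _ _ _ (by simpa using hk), getElem_map,
    getElem_range, prod_alternatingWord_eq_mul_pow, if_neg (by simp [parity_simps]),
    show (2 * k + 1) / 2 = k by omega]

open Classical in
theorem even_count_leftInvSeq_alternatingWord (i i' : B) (t : W) :
    Even (count t (lis (alternatingWord i i' (2 * M i i')))) := by
  have hperiodic : ((fun k => s i * (s i' * s i) ^ k) ∘ fun k => M i i' + k) =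
      fun k => s i * (s i' * s i) ^ k := by
    funext k
    simp [pow_add]
  rw [leftInvSeq_alternatingWord_two_mul, two_mul, range_add, map_append, map_map, hperiodic,
    count_append]
  exact Even.add_self _

theorem isLiftable_simpleSignPerm : M.IsLiftable cs.simpleSignPerm := by
  intro i i'
  rw [← wordSignPerm_alternatingWord]
  ext ⟨t, ε⟩ : 1
  have hπ : π (alternatingWord i i' (2 * M i i')) = 1 := by
    rw [prod_alternatingWord_eq_mul_pow, if_pos (even_two_mul _),
      Nat.mul_div_cancel_left _ two_pos, one_mul, simple_mul_simple_pow]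
  rw [wordSignPerm_apply, hπ, map_one, MulAut.one_apply,
    (cs.even_count_leftInvSeq_alternatingWord i i' t).neg_one_pow, one_mul, Equiv.Perm.one_apply]

noncomputable def signPerm : W →* Equiv.Perm (W × ℤˣ) :=
  cs.lift ⟨cs.simpleSignPerm, cs.isLiftable_simpleSignPerm⟩

theorem signPerm_simple (i : B) : cs.signPerm (s i) = cs.simpleSignPerm i :=
  cs.lift_apply_simple _ i

theorem signPerm_wordProd (ω : List B) : cs.signPerm (π ω) = cs.wordSignPerm ω := by
  induction ω with
  | nil => simp [wordSignPerm]
  | cons i ω ih =>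
    rw [wordProd_cons, map_mul, ih, signPerm_simple]
    simp only [wordSignPerm, map_cons, prod_cons]

theorem signPerm_apply (w t : W) (ε : ℤˣ) :
    cs.signPerm w (t, ε) = (MulAut.conj w t, (cs.signPerm w (t, 1)).2 * ε) := by
  obtain ⟨ω, -, rfl⟩ := cs.exists_isReduced w
  simp [signPerm_wordProd, wordSignPerm_apply]

variable {cs} in
theorem IsReflection.signPerm_apply_self {t : W} (ht : cs.IsReflection t) (ε : ℤˣ) :
    cs.signPerm t (t, ε) = (t, -ε) := by
  obtain ⟨w, i, rfl⟩ := ht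
  set δ := (cs.signPerm w (s i, 1)).2
  have hpre : (cs.signPerm w)⁻¹ (w * s i * w⁻¹, ε) = (s i, δ * ε) := by
    rw [Equiv.Perm.inv_eq_iff_eq, signPerm_apply, MulAut.conj_apply, ← mul_assoc,
      Int.units_mul_self, one_mul]
  rw [map_mul, map_mul, map_inv, Equiv.Perm.mul_apply, Equiv.Perm.mul_apply, hpre,
    signPerm_simple, simpleSignPerm_apply, if_pos rfl, signPerm_apply]
  simp [δ, cs.conj_simple_self, ← mul_assoc, Int.units_mul_self]

theorem mem_leftInvSeq_of_isLeftInversion {ω : List B} {t : W}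
    (h : cs.IsLeftInversion (π ω) t) : t ∈ lis ω := by
  classical
  obtain ⟨ht, hlt⟩ := h
  obtain ⟨σ, hσ, hσω⟩ := cs.exists_isReduced (t * π ω)
  have hω : π ω = t * π σ := by rw [← hσω, ← mul_assoc, ht.mul_self, one_mul]
  have hσt : t ∉ lis σ := fun hmem => by
    have := (cs.isLeftInversion_of_mem_leftInvSeq hσ hmem).2
    rw [← hσω, ← mul_assoc, ht.mul_self, one_mul] at this
    omega
  set x := MulAut.conj (π ω)⁻¹ t
  have hx : MulAut.conj (π σ) x = t := by
    simp only [x, ← hσω, MulAut.conj_apply]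
    group
  -- Compute `signPerm (π ω)` at `x` once along `π ω = t * π σ`, where the reduced word `σ`
  -- avoids `t` and `t` flips the sign, and once along `ω`.
  have hsign : cs.signPerm (π ω) (x, 1) = (t, -1) := by
    rw [hω, map_mul, Equiv.Perm.mul_apply, signPerm_wordProd, wordSignPerm_apply, hx,
      count_eq_zero_of_not_mem hσt, pow_zero, mul_one, ht.signPerm_apply_self]
  rw [signPerm_wordProd, wordSignPerm_apply, ← MulAut.mul_apply, ← map_mul, mul_inv_cancel,
    map_one, MulAut.one_apply, Prod.mk.injEq, mul_one] at hsign
  by_contra hnot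
  rw [count_eq_zero_of_not_mem hnot, pow_zero] at hsign
  exact absurd hsign.2 (by decide)

theorem exists_eraseIdx_of_isLeftInversion {ω : List B} {t : W}
    (h : cs.IsLeftInversion (π ω) t) : ∃ j < ω.length, t * π ω = π (ω.eraseIdx j) := by
  obtain ⟨j, hj, rfl⟩ := mem_iff_getElem.mp (cs.mem_leftInvSeq_of_isLeftInversion h)
  rw [length_leftInvSeq] at hj
  exact ⟨j, hj, by rw [← getD_eq_getElem _ 1, getD_leftInvSeq_mul_wordProd]⟩

theorem exists_isReduced_sublist (ω : List B) :
    ∃ ω' : List B, ω' <+ ω ∧ cs.IsReduced ω' ∧ π ω' = π ω := by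
  induction ω with
  | nil => exact ⟨[], Sublist.slnil, by simp [IsReduced], rfl⟩
  | cons i ω ih =>
    obtain ⟨ρ, hρω, hρ, hρπ⟩ := ih
    have hπ : π (i :: ω) = s i * π ρ := by rw [wordProd_cons, hρπ]
    rcases cs.length_simple_mul (π ρ) i with hasc | hdesc
    · refine ⟨i :: ρ, hρω.cons_cons i, ?_, by rw [wordProd_cons, hπ]⟩
      rw [IsReduced, wordProd_cons, hasc, hρ.eq, length_cons]
    · obtain ⟨j, hj, hjπ⟩ :=
        cs.exists_eraseIdx_of_isLeftInversion (ω := ρ) ⟨cs.isReflection_simple i, by omega⟩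
      refine ⟨ρ.eraseIdx j, (eraseIdx_sublist ρ j).trans (hρω.cons i), ?_,
        by rw [← hjπ, hπ]⟩
      have hlen := length_eraseIdx_add_one hj
      rw [IsReduced, ← hjπ]
      rw [IsReduced] at hρ
      omega

section BruhatGraph

def BruhatEdge (x y : W) : Prop := ∃ t, cs.IsReflection t ∧ t * x = y ∧ ℓ x < ℓ y

def BruhatGraphLE : W → W → Prop := Relation.ReflTransGen cs.BruhatEdge

variable {cs}

theorem bruhatGraphLE_simple_mul {w : W} {i : B} (h : ℓ w < ℓ (s i * w)) :
    cs.BruhatGraphLE w (s i * w) :=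
  .single ⟨s i, cs.isReflection_simple i, rfl, h⟩

theorem exists_sublist_of_bruhatGraphLE {x y : W} (h : cs.BruhatGraphLE x y) {τ : List B}
    (hτ : cs.IsReduced τ) (hτy : π τ = y) : ∃ γ : List B, γ <+ τ ∧ π γ = x := by
  induction h generalizing τ with
  | refl => exact ⟨τ, .refl τ, hτy⟩
  | tail _ hzy ih =>
    obtain ⟨t, ht, rfl, hlt⟩ := hzy
    have hinv : cs.IsLeftInversion (π τ) t := by
      rw [hτy]
      exact ⟨ht, by rwa [← mul_assoc, ht.mul_self, one_mul]⟩
    obtain ⟨j, -, hj⟩ := cs.exists_eraseIdx_of_isLeftInversion hinv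
    obtain ⟨δ, hδ, hδred, hδπ⟩ := cs.exists_isReduced_sublist (τ.eraseIdx j)
    obtain ⟨γ, hγ, hγπ⟩ :=
      ih hδred (by rw [hδπ, ← hj, hτy, ← mul_assoc, ht.mul_self, one_mul])
    exact ⟨γ, hγ.trans (hδ.trans (eraseIdx_sublist τ j)), hγπ⟩

theorem bruhatEdge_simple_mul_or_eq {x y : W} (h : cs.BruhatEdge x y) (i : B) :
    cs.BruhatEdge (s i * x) (s i * y) ∨ s i * x = y := by
  obtain ⟨t, ht, rfl, hlt⟩ := h
  set t' := MulAut.conj (s i) t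
  have ht' : cs.IsReflection t' := by simpa [t'] using ht.conj (s i)
  have hy : s i * (t * x) = t' * (s i * x) := by simp [t', mul_assoc]
  rcases lt_or_gt_of_ne (ht'.length_mul_right_ne (s i * x)) with hdesc | hasc
  · right
    obtain ⟨ρ, hρ, rfl⟩ := cs.exists_isReduced x
    obtain ⟨j, hj, hjπ⟩ :=
      cs.exists_eraseIdx_of_isLeftInversion (ω := i :: ρ) ⟨ht', by rwa [wordProd_cons]⟩
    rw [wordProd_cons, ← hy] at hjπ
    -- Deleting a letter of `ρ` would make `y = t * x` shorter than `x`.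
    cases j with
    | zero =>
      rw [eraseIdx_cons_zero] at hjπ
      nth_rw 1 [← hjπ]
      rw [simple_mul_simple_cancel_left]
    | succ k =>
      rw [eraseIdx_cons_succ, wordProd_cons, mul_right_inj] at hjπ
      have := congrArg cs.length hjπ
      have := cs.length_wordProd_le (ρ.eraseIdx k)
      have := length_eraseIdx_add_one (l := ρ) (i := k) (by simpa using hj)
      rw [IsReduced] at hρ
      omega
  · exact .inl ⟨t', ht', hy.symm, by rwa [hy]⟩

theorem simple_mul_bruhatGraphLE_of_isLeftDescent {w : W} {i : B} (h : cs.IsLeftDescent w i) :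
    cs.BruhatGraphLE (s i * w) w := by
  have := bruhatGraphLE_simple_mul (cs := cs) (w := s i * w) (i := i)
    (by rwa [simple_mul_simple_cancel_left])
  rwa [simple_mul_simple_cancel_left] at this

theorem BruhatGraphLE.simple_mul_or {x y : W} (h : cs.BruhatGraphLE x y) (i : B) :
    cs.BruhatGraphLE (s i * x) (s i * y) ∨ cs.BruhatGraphLE (s i * x) y := by
  induction h with
  | refl => exact .inl .refl
  | tail _ hzy ih =>
    rcases ih with hz | hz
    · rcases bruhatEdge_simple_mul_or_eq hzy i with hedge | heq
      · exact .inl (hz.tail hedge)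
      · exact .inr (heq ▸ hz)
    · exact .inr (hz.tail hzy)

theorem BruhatGraphLE.simple_mul_of_length_lt {x y : W} (h : cs.BruhatGraphLE x y) {i : B}
    (hy : ℓ y < ℓ (s i * y)) : cs.BruhatGraphLE (s i * x) (s i * y) :=
  (h.simple_mul_or i).elim id fun h' => h'.trans (bruhatGraphLE_simple_mul hy)

theorem BruhatGraphLE.simple_mul_left_of_isLeftDescent {x y : W} (h : cs.BruhatGraphLE x y)
    {i : B} (hy : cs.IsLeftDescent y i) : cs.BruhatGraphLE (s i * x) y :=
  (h.simple_mul_or i).elim (fun h' => h'.trans (simple_mul_bruhatGraphLE_of_isLeftDescent hy)) id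

theorem bruhatGraphLE_of_sublist {τ β : List B} (hτ : cs.IsReduced τ) (hβ : β <+ τ) :
    cs.BruhatGraphLE (π β) (π τ) := by
  induction τ generalizing β with
  | nil =>
    rw [sublist_nil.mp hβ]
    exact .refl
  | cons c τ ih =>
    have hτ' : cs.IsReduced τ := by simpa using hτ.drop 1
    have hasc : ℓ (π τ) < ℓ (s c * π τ) := by
      rw [← wordProd_cons, hτ.eq, hτ'.eq, length_cons]
      exact Nat.lt_succ_self _
    rw [wordProd_cons]
    rcases sublist_cons_iff.mp hβ with hβτ | ⟨β', rfl, hβ'τ⟩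
    · exact (ih hτ' hβτ).trans (bruhatGraphLE_simple_mul hasc)
    · rw [wordProd_cons]
      exact (ih hτ' hβ'τ).simple_mul_of_length_lt hasc

theorem bruhatLE_iff_bruhatGraphLE {x y : W} : cs.bruhatLE x y ↔ cs.BruhatGraphLE x y := by
  constructor
  · rintro ⟨τ, hτ, rfl, β, hβ, rfl⟩
    exact bruhatGraphLE_of_sublist hτ hβ
  · intro h
    obtain ⟨τ, hτ, rfl⟩ := cs.exists_isReduced y
    exact ⟨τ, hτ, rfl, cs.exists_sublist_of_bruhatGraphLE h hτ rfl⟩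

end BruhatGraph

theorem induction_on_ascent {p : W → Prop} (one : p 1)
    (simple_mul : ∀ w i, ℓ w < ℓ (s i * w) → p w → p (s i * w)) (w : W) : p w := by
  obtain ⟨ω, hω, rfl⟩ := cs.exists_isReduced w
  induction ω with
  | nil => exact one
  | cons i ω ih =>
    have hω' : cs.IsReduced ω := by simpa using hω.drop 1
    rw [wordProd_cons]
    refine simple_mul _ i ?_ (ih hω')
    rw [← wordProd_cons, hω.eq, hω'.eq, length_cons]
    exact Nat.lt_succ_self _

theorem exists_bruhatGraphLE_mul (u : W) {w w' : W} (h : cs.BruhatGraphLE w' w) :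
    ∃ v', cs.BruhatGraphLE v' u ∧ cs.BruhatGraphLE (u * w') (v' * w) := by
  induction u using cs.induction_on_ascent with
  | one => exact ⟨1, .refl, by simpa using h⟩
  | simple_mul u i hu ih =>
    obtain ⟨v, hvu, hv⟩ := ih
    rw [mul_assoc]
    rcases lt_or_gt_of_ne (cs.length_simple_mul_ne (v * w) i).symm with hasc | hdesc
    · refine ⟨s i * v, hvu.simple_mul_of_length_lt hu, ?_⟩
      rw [mul_assoc]
      exact hv.simple_mul_of_length_lt hasc
    · exact ⟨v, hvu.trans (bruhatGraphLE_simple_mul hu),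
        hv.simple_mul_left_of_isLeftDescent hdesc⟩

end CoxeterSystem

/-- If `w' ≤ w`, then there exists `v' ≤ u` with `u w' ≤ v' w`. -/
theorem exists_le_mul_le_mul' (cs : CoxeterSystem M W) (u w w' : W)
    (h : cs.bruhatLE w' w) :
    ∃ v' : W, cs.bruhatLE v' u ∧ cs.bruhatLE (u * w') (v' * w) := by
  simp only [bruhatLE_iff_bruhatGraphLE] at h ⊢
  exact cs.exists_bruhatGraphLE_mul u h
end

section
/- Let J ⊆ I and w ∈ W^{δ(J)}. Suppose u₁, u₂ ∈ W_δ(J,w), v₁ ∈ W_{δ(I_2(J,u₁,δ))} and v₂ ∈ W_{δ(I_2(J,u₂,δ))} satisfy u₁ v₁ = u₂ v₂. Then u₁ = u₂ and v₁ = v₂. -/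
open CoxeterSystem

variable {B W : Type*} [Group W] {M : CoxeterMatrix B}

/-- The set of reflections of `W` lying in the standard parabolic subgroup `W_K`;
this is in canonical bijection with (the positive half of) the root subsystem `Φ_K`. -/
def CoxeterSystem.reflSet (cs : CoxeterSystem M W) (K : Set B) : Set W :=
  {t | cs.IsReflection t ∧ t ∈ cs.parab K}

/-- `I₁(J, w, δ)`: the largest subset `K ⊆ J` with `w ∈ W^{δ(K)}` (the family of such `K`
is closed under unions, so the largest one is their union). -/
def CoxeterSystem.I1 (cs : CoxeterSystem M W) (π : B ≃ B) (J : Set B) (w : W) : Set B :=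
  ⋃₀ {K | K ⊆ J ∧ cs.IsMinRight (π '' K) w}

/-- `I₂(J, w, δ)`: the largest subset `K ⊆ J` with `w(Φ_{δ(K)}) = Φ_K` (the family of such
`K` is closed under unions, so the largest one is their union). The condition
`w(Φ_{δ(K)}) = Φ_K` is expressed equivalently as: conjugation by `w` maps the set of
reflections in `W_{δ(K)}` onto the set of reflections in `W_K`. -/
def CoxeterSystem.I2 (cs : CoxeterSystem M W) (π : B ≃ B) (J : Set B) (w : W) : Set B :=
  ⋃₀ {K | K ⊆ J ∧ (fun t => w * t * w⁻¹) '' cs.reflSet (π '' K) = cs.reflSet K}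

/-!
Conjugation by `u` maps `W_{δ(K)}` onto `W_K` exactly when it maps the reflections of the one onto
those of the other; this condition is preserved under unions of the sets `K` and under replacing
`u` by `u * v` with `v ∈ W_{δ(K)}`. So with `Kₖ = I₂(J, uₖ, δ)`, the element `u₁ * v₁ = u₂ * v₂`,
and then `u₁` and `u₂` themselves, conjugate `W_{δ(K₁ ∪ K₂)}` onto `W_{K₁ ∪ K₂}`, and maximality
of `I₂` gives `K₁ = K₂ =: K`. Then `u₁⁻¹ * u₂ = v₁ * v₂⁻¹ ∈ W_{δ(K)}`, and since
`K ⊆ I₁(J, uₖ, δ)` neither `u₁` nor `u₂` has a right descent in `δ(K)`. An element without right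
descents in `L` is the unique element of minimal length in its coset modulo `W_L`, so `u₁ = u₂`.

That last fact rests on the exchange condition, which we derive, as Tits did, from the parity
representation of `W` on `W × ZMod 2`: the parity of the number of occurrences of `t` in the right
inversion sequence of a word only depends on the product of the word.
-/

open Pointwise

theorem Subgroup.conj_mul_smul_of_mem {G : Type*} [Group G] {H : Subgroup G} {v : G} (u : G)
    (hv : v ∈ H) : MulAut.conj (u * v) • H = MulAut.conj u • H := by
  rw [map_mul, mul_smul, Subgroup.conj_smul_eq_self_of_mem hv]

namespace CoxeterSystem

variable (cs : CoxeterSystem M W)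

section ParityRepresentation

variable [DecidableEq W]

def parityPermFun (i : B) (x : W × ZMod 2) : W × ZMod 2 :=
  (cs.simple i * x.1 * cs.simple i, x.2 + if x.1 = cs.simple i then 1 else 0)

theorem parityPermFun_involutive (i : B) : Function.Involutive (cs.parityPermFun i) := by
  rintro ⟨t, e⟩
  have hfix : cs.simple i * t * cs.simple i = cs.simple i ↔ t = cs.simple i := by
    constructor
    · intro h
      simpa [mul_assoc] using congrArg (cs.simple i * · * cs.simple i) h
    · rintro rfl
      simp
  simp only [parityPermFun, hfix, add_assoc, CharTwo.add_self_eq_zero, add_zero, Prod.mk.injEq,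
    and_true]
  simp [mul_assoc]

def parityPerm (i : B) : Equiv.Perm (W × ZMod 2) := (cs.parityPermFun_involutive i).toPerm

theorem parityPerm_apply (i : B) (t : W) (e : ZMod 2) :
    cs.parityPerm i (t, e) =
      (cs.simple i * t * cs.simple i, e + if t = cs.simple i then 1 else 0) :=
  rfl

theorem parityPerm_mul_pow_apply (i j : B) (k : ℕ) (t : W) (e : ZMod 2) :
    ((cs.parityPerm i * cs.parityPerm j) ^ k) (t, e) =
      (MulAut.conj ((cs.simple i * cs.simple j) ^ k) t,
        e + ∑ q ∈ Finset.range (2 * k),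
          if (cs.simple i * cs.simple j) ^ q * (t * cs.simple j) = 1 then 1 else 0) := by
  set p := cs.simple i * cs.simple j
  induction k generalizing t e with
  | zero => simp
  | succ k ih =>
    have hp : p⁻¹ * cs.simple j = cs.simple j * p := by simp [p, mul_assoc]
    have hstep : ∀ q : ℕ, p ^ q * (p * t * p⁻¹ * cs.simple j) = 1 ↔
        p ^ (q + 2) * (t * cs.simple j) = 1 := by
      intro q
      rw [mul_assoc _ p⁻¹, hp, pow_add, ← conj_eq_one_iff (a := p)]
      constructor <;> intro h <;> rw [← h] <;> group
    have hconj : cs.simple i * (cs.simple j * t * cs.simple j) * cs.simple i = p * t * p⁻¹ := by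
      simp [p, mul_assoc]
    have h₀ : t = cs.simple j ↔ p ^ 0 * (t * cs.simple j) = 1 := by
      rw [pow_zero, one_mul, mul_eq_one_iff_eq_inv, inv_simple]
    have h₁ : cs.simple j * t * cs.simple j = cs.simple i ↔ p ^ 1 * (t * cs.simple j) = 1 := by
      have : p ^ 1 * (t * cs.simple j) = cs.simple i * (cs.simple j * t * cs.simple j) := by
        simp [p, mul_assoc]
      rw [this, mul_eq_one_iff_inv_eq, inv_simple, eq_comm]
    rw [pow_succ, Equiv.Perm.mul_apply, Equiv.Perm.mul_apply, parityPerm_apply, parityPerm_apply,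
      ih, hconj, Prod.mk.injEq]
    constructor
    · simp only [MulAut.conj_apply]
      group
    · rw [show 2 * (k + 1) = 2 * k + 1 + 1 by ring, Finset.sum_range_succ', Finset.sum_range_succ']
      simp only [hstep, h₀, h₁]
      ring

theorem isLiftable_parityPerm : M.IsLiftable cs.parityPerm := by
  intro i j
  ext ⟨t, e⟩ : 1
  have hp : (cs.simple i * cs.simple j) ^ M i j = 1 := cs.simple_mul_simple_pow i j
  -- since `(sᵢ sⱼ) ^ M i j = 1`, the sum over `range (2 * M i j)` counts every term twice
  rw [parityPerm_mul_pow_apply, two_mul, Finset.sum_range_add]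
  simp only [pow_add, hp, one_mul, CharTwo.add_self_eq_zero, add_zero, map_one]
  rfl

def parityRep : W →* Equiv.Perm (W × ZMod 2) := cs.lift ⟨cs.parityPerm, cs.isLiftable_parityPerm⟩

theorem parityRep_wordProd (ω : List B) (t : W) (e : ZMod 2) :
    cs.parityRep (cs.wordProd ω) (t, e) =
      (MulAut.conj (cs.wordProd ω) t, e + (cs.rightInvSeq ω).count t) := by
  induction ω generalizing e with
  | nil => simp [rightInvSeq]
  | cons i ω ih =>
    rw [wordProd_cons, map_mul, Equiv.Perm.mul_apply, ih, parityRep, lift_apply_simple,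
      parityPerm_apply, Prod.mk.injEq]
    constructor
    · simp only [MulAut.conj_apply, mul_inv_rev, inv_simple, mul_assoc]
    · have hcond : (cs.wordProd ω)⁻¹ * cs.simple i * cs.wordProd ω = t ↔
          MulAut.conj (cs.wordProd ω) t = cs.simple i := by
        rw [MulAut.conj_apply]
        constructor <;> intro h <;> rw [← h] <;> group
      simp only [MulAut.conj_apply, add_assoc, rightInvSeq, List.count_cons, beq_iff_eq, hcond,
        Nat.cast_add, Nat.cast_ite, Nat.cast_one, Nat.cast_zero, add_right_inj]
      congr

theorem count_rightInvSeq_eq_of_wordProd_eq {ω ω' : List B}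
    (h : cs.wordProd ω = cs.wordProd ω') (t : W) :
    ((cs.rightInvSeq ω).count t : ZMod 2) = (cs.rightInvSeq ω').count t := by
  have := congrArg Prod.snd <|
    (cs.parityRep_wordProd ω t 0).symm.trans (h ▸ cs.parityRep_wordProd ω' t 0)
  simpa using this

end ParityRepresentation

theorem exists_wordProd_eraseIdx_eq_mul_simple {ω : List B} {i : B}
    (hi : cs.IsRightDescent (cs.wordProd ω) i) :
    ∃ j < ω.length, cs.wordProd (ω.eraseIdx j) = cs.wordProd ω * cs.simple i := by
  classical
  obtain ⟨ω₁, hω₁, hprod₁⟩ := cs.exists_isReduced (cs.wordProd ω * cs.simple i)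
  have hnot : cs.simple i ∉ cs.rightInvSeq ω₁ := fun hmem => by
    have := (cs.isRightInversion_of_mem_rightInvSeq hω₁ hmem).2
    rw [← hprod₁, simple_mul_simple_cancel_right] at this
    exact lt_asymm this hi
  have hodd : ((cs.rightInvSeq (ω₁.concat i)).count (cs.simple i) : ZMod 2) = 1 := by
    have hfix : MulAut.conj (cs.simple i) (cs.simple i) = cs.simple i := by simp
    have hmap := List.count_map_of_injective (cs.rightInvSeq ω₁) _
      (MulAut.conj (cs.simple i)).injective (cs.simple i)
    rw [hfix] at hmap
    rw [rightInvSeq_concat, List.concat_eq_append, List.count_append, hmap,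
      List.count_eq_zero.2 hnot]
    simp
  have hmem : cs.simple i ∈ cs.rightInvSeq ω := by
    have hpar := cs.count_rightInvSeq_eq_of_wordProd_eq (ω := ω₁.concat i) (ω' := ω)
      (by rw [wordProd_concat, ← hprod₁, simple_mul_simple_cancel_right]) (cs.simple i)
    rw [hodd] at hpar
    by_contra hnot'
    rw [List.count_eq_zero.2 hnot'] at hpar
    exact zero_ne_one hpar.symm
  obtain ⟨j, hj, hget⟩ := List.getElem_of_mem hmem
  refine ⟨j, by simpa using hj, ?_⟩
  rw [← wordProd_mul_getD_rightInvSeq, List.getD_eq_getElem _ _ hj, hget]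

theorem wordProd_mem_parab {L : Set B} {ω : List B} (hω : ∀ i ∈ ω, i ∈ L) :
    cs.wordProd ω ∈ cs.parab L := by
  induction ω with
  | nil => exact one_mem _
  | cons i ω ih =>
    rw [List.forall_mem_cons] at hω
    exact mul_mem (Subgroup.subset_closure ⟨i, hω.1, rfl⟩) (ih hω.2)

theorem exists_word_of_mem_parab {L : Set B} {v : W} (hv : v ∈ cs.parab L) :
    ∃ ω : List B, (∀ i ∈ ω, i ∈ L) ∧ cs.wordProd ω = v := by
  induction hv using Subgroup.closure_induction with
  | mem x hx =>
    obtain ⟨i, hi, rfl⟩ := hx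
    exact ⟨[i], by simpa using hi, cs.wordProd_singleton i⟩
  | one => exact ⟨[], by simp, cs.wordProd_nil⟩
  | mul x y _ _ hx hy =>
    obtain ⟨ωx, hxL, rfl⟩ := hx
    obtain ⟨ωy, hyL, rfl⟩ := hy
    exact ⟨ωx ++ ωy, List.forall_mem_append.2 ⟨hxL, hyL⟩, cs.wordProd_append ωx ωy⟩
  | inv x _ hx =>
    obtain ⟨ω, hL, rfl⟩ := hx
    exact ⟨ω.reverse, by simpa using hL, cs.wordProd_reverse ω⟩

def IsShortestWordIn (L : Set B) (ω : List B) : Prop :=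
  (∀ i ∈ ω, i ∈ L) ∧
    ∀ ω' : List B, (∀ i ∈ ω', i ∈ L) → cs.wordProd ω' = cs.wordProd ω → ω.length ≤ ω'.length

theorem exists_isShortestWordIn {L : Set B} {v : W} (hv : v ∈ cs.parab L) :
    ∃ ω, cs.IsShortestWordIn L ω ∧ cs.wordProd ω = v := by
  obtain ⟨ω, hω, hmin⟩ := (InvImage.wf List.length wellFounded_lt).has_min
    {ω | (∀ i ∈ ω, i ∈ L) ∧ cs.wordProd ω = v} (cs.exists_word_of_mem_parab hv)
  exact ⟨ω, ⟨hω.1, fun ω' hω'L hω' => not_lt.1 (hmin ω' ⟨hω'L, hω'.trans hω.2⟩)⟩, hω.2⟩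

variable {cs}

theorem IsShortestWordIn.of_append_left {L : Set B} {ω ω' : List B}
    (h : cs.IsShortestWordIn L (ω ++ ω')) : cs.IsShortestWordIn L ω := by
  refine ⟨fun i hi => h.1 i (List.mem_append_left _ hi), fun ω'' hω''L hω'' => ?_⟩
  have := h.2 (ω'' ++ ω') (List.forall_mem_append.2 ⟨hω''L, (List.forall_mem_append.1 h.1).2⟩)
    (by rw [wordProd_append, wordProd_append, hω''])
  simpa using this

theorem IsMinRight.length_mul_wordProd {L : Set B} {m : W} (hm : cs.IsMinRight L m)
    {ω : List B} (hω : cs.IsShortestWordIn L ω) :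
    cs.length (m * cs.wordProd ω) = cs.length m + ω.length := by
  induction ω using List.reverseRecOn with
  | nil => simp
  | append_singleton ω l ih =>
    suffices ¬ cs.IsRightDescent (m * cs.wordProd ω) l by
      rw [wordProd_append, wordProd_singleton, ← mul_assoc, cs.not_isRightDescent_iff.1 this,
        ih hω.of_append_left, List.length_append, List.length_singleton, add_assoc]
    intro hdesc
    obtain ⟨ρ, hρ, rfl⟩ := cs.exists_isReduced m
    rw [← wordProd_append] at hdesc
    obtain ⟨j, hj, hjprod⟩ := cs.exists_wordProd_eraseIdx_eq_mul_simple hdesc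
    rcases lt_or_ge j ρ.length with hjρ | hjρ
    · -- deleting a letter of `ρ` gives a shorter element of the coset `m W_L`
      rw [List.eraseIdx_append_of_lt_length hjρ, wordProd_append, wordProd_append] at hjprod
      have hx : cs.wordProd ω * cs.simple l * (cs.wordProd ω)⁻¹ ∈ cs.parab L := by
        have hωL := cs.wordProd_mem_parab (List.forall_mem_append.1 hω.1).1
        have hl : cs.simple l ∈ cs.parab L :=
          Subgroup.subset_closure ⟨l, (List.forall_mem_append.1 hω.1).2 l (by simp), rfl⟩
        exact mul_mem (mul_mem hωL hl) (inv_mem hωL)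
      have hlen := hm _ hx
      rw [show cs.wordProd ρ * (cs.wordProd ω * cs.simple l * (cs.wordProd ω)⁻¹) =
          cs.wordProd (ρ.eraseIdx j) by rw [eq_mul_inv_of_mul_eq hjprod]; group] at hlen
      have := cs.length_wordProd_le (ρ.eraseIdx j)
      rw [List.length_eraseIdx_of_lt hjρ] at this
      unfold IsReduced at hρ
      omega
    · -- deleting a letter of `ω` gives a shorter word in `L`
      rw [List.eraseIdx_append_of_length_le hjρ, wordProd_append, wordProd_append, mul_assoc,
        mul_right_inj] at hjprod
      have := hω.2 (ω.eraseIdx (j - ρ.length))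
        (fun i hi => hω.1 i (List.mem_append_left _ (List.mem_of_mem_eraseIdx hi)))
        (by rw [hjprod, wordProd_append, wordProd_singleton])
      simp only [List.length_append, List.length_singleton, List.length_eraseIdx] at this hj
      split_ifs at this <;> omega

theorem IsMinRight.eq_of_forall_not_isRightDescent {L : Set B} {m z : W}
    (hm : cs.IsMinRight L m) (hz : ∀ l ∈ L, ¬ cs.IsRightDescent z l)
    (hmz : m⁻¹ * z ∈ cs.parab L) : z = m := by
  obtain ⟨ω, hω, hprod⟩ := cs.exists_isShortestWordIn hmz
  have hz_eq : z = m * cs.wordProd ω := by rw [hprod]; group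
  rcases List.eq_nil_or_concat ω with rfl | ⟨ω', l, rfl⟩
  · simpa using hz_eq
  refine absurd ?_ (hz l (hω.1 l (by simp)))
  calc cs.length (z * cs.simple l)
      = cs.length (m * cs.wordProd ω') := by
        rw [hz_eq, wordProd_concat, mul_assoc, simple_mul_simple_cancel_right]
    _ ≤ cs.length m + ω'.length := (cs.length_mul_le _ _).trans (by
        grw [cs.length_wordProd_le])
    _ < cs.length m + (ω'.concat l).length := by simp
    _ = cs.length z := by rw [hz_eq, hm.length_mul_wordProd hω]

variable (cs)

theorem eq_of_forall_not_isRightDescent_of_inv_mul_mem_parab {L : Set B} {u u' : W}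
    (hu : ∀ l ∈ L, ¬ cs.IsRightDescent u l) (hu' : ∀ l ∈ L, ¬ cs.IsRightDescent u' l)
    (h : u⁻¹ * u' ∈ cs.parab L) : u = u' := by
  obtain ⟨m, hm : u⁻¹ * m ∈ cs.parab L, hmin⟩ := (InvImage.wf cs.length wellFounded_lt).has_min
    {z | u⁻¹ * z ∈ cs.parab L} ⟨u, by simp [one_mem]⟩
  have hm_min : cs.IsMinRight L m := fun x hx =>
    not_lt.1 (hmin (m * x) (by simpa [mul_assoc] using mul_mem hm hx))
  have hmu : m⁻¹ * u ∈ cs.parab L := by simpa using inv_mem hm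
  rw [hm_min.eq_of_forall_not_isRightDescent hu hmu,
    hm_min.eq_of_forall_not_isRightDescent hu' (by simpa [mul_assoc] using mul_mem hmu h)]

theorem parab_eq_closure_reflSet (K : Set B) : cs.parab K = Subgroup.closure (cs.reflSet K) :=
  le_antisymm (Subgroup.closure_le _ |>.2 fun _ ⟨i, hi, hs⟩ =>
      Subgroup.subset_closure ⟨hs ▸ cs.isReflection_simple i, Subgroup.subset_closure ⟨i, hi, hs⟩⟩)
    (Subgroup.closure_le _ |>.2 fun _ ht => ht.2)

theorem image_conj_reflSet_eq_iff (u : W) (A C : Set B) :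
    (fun t => u * t * u⁻¹) '' cs.reflSet A = cs.reflSet C ↔
      MulAut.conj u • cs.parab A = cs.parab C := by
  constructor
  · intro h
    rw [parab_eq_closure_reflSet, parab_eq_closure_reflSet, Subgroup.smul_closure, ← h,
      ← Set.image_smul]
    rfl
  · intro h
    ext t
    have hconj : (MulAut.conj u)⁻¹ • t = u⁻¹ * t * u := by simp [MulAut.smul_def]
    simp only [reflSet, Set.mem_image, Set.mem_ofPred_eq, ← h,
      Subgroup.mem_pointwise_smul_iff_inv_smul_mem, hconj]
    constructor
    · rintro ⟨x, ⟨hx, hxA⟩, rfl⟩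
      exact ⟨hx.conj u, by simpa [mul_assoc] using hxA⟩
    · rintro ⟨ht, htA⟩
      exact ⟨u⁻¹ * t * u, ⟨by simpa using ht.conj u⁻¹, htA⟩, by group⟩

theorem parab_iUnion {ι : Type*} (A : ι → Set B) :
    cs.parab (⋃ i, A i) = ⨆ i, cs.parab (A i) := by
  rw [parab, Set.image_iUnion, Subgroup.closure_iUnion]
  rfl

theorem parab_union (A C : Set B) : cs.parab (A ∪ C) = cs.parab A ⊔ cs.parab C := by
  rw [parab, Set.image_union, Subgroup.closure_union]
  rfl

theorem I2_subset (π : B ≃ B) (J : Set B) (u : W) : cs.I2 π J u ⊆ J :=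
  Set.sUnion_subset fun _ hK => hK.1

theorem subset_I2 {π : B ≃ B} {J K : Set B} {u : W} (hKJ : K ⊆ J)
    (h : MulAut.conj u • cs.parab (π '' K) = cs.parab K) : K ⊆ cs.I2 π J u :=
  Set.subset_sUnion_of_mem ⟨hKJ, (cs.image_conj_reflSet_eq_iff u _ _).2 h⟩

theorem conj_smul_parab_image_I2 (π : B ≃ B) (J : Set B) (u : W) :
    MulAut.conj u • cs.parab (π '' cs.I2 π J u) = cs.parab (cs.I2 π J u) := by
  rw [I2, Set.sUnion_eq_iUnion, Set.image_iUnion, parab_iUnion, parab_iUnion,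
    Subgroup.pointwise_smul_def]
  exact (Subgroup.map_iSup _ _).trans
    (iSup_congr fun K => (cs.image_conj_reflSet_eq_iff u _ _).1 K.2.2)

theorem I2_subset_I2_of_mul_eq_mul {π : B ≃ B} {J : Set B} {u₁ u₂ v₁ v₂ : W}
    (hv₁ : v₁ ∈ cs.parab (π '' cs.I2 π J u₁)) (hv₂ : v₂ ∈ cs.parab (π '' cs.I2 π J u₂))
    (heq : u₁ * v₁ = u₂ * v₂) : cs.I2 π J u₂ ⊆ cs.I2 π J u₁ := by
  set K₁ := cs.I2 π J u₁
  set K₂ := cs.I2 π J u₂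
  have hK₁ : MulAut.conj (u₁ * v₁) • cs.parab (π '' K₁) = cs.parab K₁ := by
    rw [Subgroup.conj_mul_smul_of_mem u₁ hv₁, conj_smul_parab_image_I2]
  have hK₂ : MulAut.conj (u₁ * v₁) • cs.parab (π '' K₂) = cs.parab K₂ := by
    rw [heq, Subgroup.conj_mul_smul_of_mem u₂ hv₂, conj_smul_parab_image_I2]
  have hunion : MulAut.conj u₁ • cs.parab (π '' (K₁ ∪ K₂)) = cs.parab (K₁ ∪ K₂) := by
    rw [Set.image_union, parab_union, parab_union,
      ← Subgroup.conj_mul_smul_of_mem u₁ (Subgroup.mem_sup_left hv₁), Subgroup.smul_sup, hK₁, hK₂]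
  exact Set.subset_union_right.trans <|
    cs.subset_I2 (Set.union_subset (cs.I2_subset π J u₁) (cs.I2_subset π J u₂)) hunion

theorem I2_eq_of_mul_eq_mul {π : B ≃ B} {J : Set B} {u₁ u₂ v₁ v₂ : W}
    (hv₁ : v₁ ∈ cs.parab (π '' cs.I2 π J u₁)) (hv₂ : v₂ ∈ cs.parab (π '' cs.I2 π J u₂))
    (heq : u₁ * v₁ = u₂ * v₂) : cs.I2 π J u₁ = cs.I2 π J u₂ :=
  (cs.I2_subset_I2_of_mul_eq_mul hv₂ hv₁ heq.symm).antisymm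
    (cs.I2_subset_I2_of_mul_eq_mul hv₁ hv₂ heq)

theorem not_isRightDescent_of_mem_image_I1 {π : B ≃ B} {J : Set B} {u : W} {l : B}
    (hl : l ∈ π '' cs.I1 π J u) : ¬ cs.IsRightDescent u l := by
  obtain ⟨k, ⟨K, hK, hkK⟩, rfl⟩ := hl
  exact (hK.2 _ (Subgroup.subset_closure ⟨π k, ⟨k, hkK, rfl⟩, rfl⟩)).not_gt

end CoxeterSystem

theorem eq_of_mul_eq_mul_I2_general (cs : CoxeterSystem M W) (π : B ≃ B)
    (d : W ≃* W)
    (J : Set B) (w : W) (u₁ u₂ v₁ v₂ : W)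
    (hu₁ : (∃ u ∈ cs.parab J, cs.bruhatLE (u⁻¹ * w * d u) u₁) ∧
      cs.I2 π J u₁ ⊆ cs.I1 π J u₁)
    (hu₂ : (∃ u ∈ cs.parab J, cs.bruhatLE (u⁻¹ * w * d u) u₂) ∧
      cs.I2 π J u₂ ⊆ cs.I1 π J u₂)
    (hv₁ : v₁ ∈ cs.parab (π '' cs.I2 π J u₁))
    (hv₂ : v₂ ∈ cs.parab (π '' cs.I2 π J u₂))
    (heq : u₁ * v₁ = u₂ * v₂) : u₁ = u₂ ∧ v₁ = v₂ := by
  have hI2 := cs.I2_eq_of_mul_eq_mul hv₁ hv₂ heq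
  have hu : u₁ = u₂ := by
    refine cs.eq_of_forall_not_isRightDescent_of_inv_mul_mem_parab
      (fun l hl => cs.not_isRightDescent_of_mem_image_I1 (Set.image_mono hu₁.2 hl))
      (fun l hl => cs.not_isRightDescent_of_mem_image_I1 (Set.image_mono hu₂.2 (hI2 ▸ hl))) ?_
    rw [show u₁⁻¹ * u₂ = v₁ * v₂⁻¹ by rw [eq_mul_inv_iff_mul_eq, mul_assoc, ← heq]; group]
    exact mul_mem hv₁ (inv_mem (hI2 ▸ hv₂))
  exact ⟨hu, mul_left_cancel (hu ▸ heq)⟩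

/-- (5.3) Let `w ∈ W^{δ(J)}`. If `u₁, u₂ ∈ W_δ(J,w)` (i.e. `uₖ ≥_{J,δ} w` and
`I₂(J,uₖ,δ) ⊆ I₁(J,uₖ,δ)`), `v₁ ∈ W_{δ(I₂(J,u₁,δ))}`, `v₂ ∈ W_{δ(I₂(J,u₂,δ))}` and
`u₁ v₁ = u₂ v₂`, then `u₁ = u₂` and `v₁ = v₂`. -/
theorem eq_of_mul_eq_mul_I2 [Finite B] [Finite W] (cs : CoxeterSystem M W) (π : B ≃ B)
    (d : W ≃* W) (hd : ∀ i : B, d (cs.simple i) = cs.simple (π i))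
    (J : Set B) (w : W) (hw : cs.IsMinRight (π '' J) w) (u₁ u₂ v₁ v₂ : W)
    (hu₁ : (∃ u ∈ cs.parab J, cs.bruhatLE (u⁻¹ * w * d u) u₁) ∧
      cs.I2 π J u₁ ⊆ cs.I1 π J u₁)
    (hu₂ : (∃ u ∈ cs.parab J, cs.bruhatLE (u⁻¹ * w * d u) u₂) ∧
      cs.I2 π J u₂ ⊆ cs.I1 π J u₂)
    (hv₁ : v₁ ∈ cs.parab (π '' cs.I2 π J u₁))
    (hv₂ : v₂ ∈ cs.parab (π '' cs.I2 π J u₂))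
    (heq : u₁ * v₁ = u₂ * v₂) : u₁ = u₂ ∧ v₁ = v₂ :=
  eq_of_mul_eq_mul_I2_general cs π d J w u₁ u₂ v₁ v₂ hu₁ hu₂ hv₁ hv₂ heq
end
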